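/- Let μ ∈ V and let ν ∈ V/W be such that pr(μ) − ν lies in the image pr(C_Γ) of the positive cone. Then: (i) there exist unique nonnegative rational coefficients (c_γ)_{γ ∈ Γ∖Γ_M} with pr(μ) − Σ_{γ ∈ Γ∖Γ_M} c_γ · pr(e_γ) = ν; and (ii) setting μ_ν := μ − Σ_{γ ∈ Γ∖Γ_M} c_γ e_γ, for every λ ∈ V one has: (λ ≤ μ and pr(λ) = ν) if and only if λ ≤_{Γ_M} μ_ν. (This is the combinatorial identity (1.34) of the paper, describing the Harder–Narasimhan truncation of a fixed degree component: λ ≤^{G^ad} μ and pr_P^{ad}(λ) = ν ⟺ λ ≤^{M̄} μ_ν.) -/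

import Mathlib

/-!
Because the `e γ` are linearly independent, a combination `∑ a γ • e γ` lies in
`W = span (e '' Γ_M)` exactly when `a` vanishes off `Γ_M`. Hence the classes `pr (e γ)`,
`γ ∉ Γ_M`, are linearly independent in `V ⧸ W`, which gives uniqueness of `c`, while existence
comes from discarding the `Γ_M`-part of `d`, which `pr` kills anyway. For (ii), if
`μ - λ = ∑ b γ • e γ` and `pr λ = ν`, then `μ_ν - λ = ∑ (b - c) γ • e γ` lies in `W`, so `b - c`
vanishes off `Γ_M` and is nonnegative on `Γ_M`, where `c` is zero.
-/

open Submodule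

section
variable {R V ι : Type*} [Ring R] [AddCommGroup V] [Module R V] [Fintype ι]
  {e : ι → V} {s : Set ι}

theorem LinearIndependent.sum_smul_mem_span_image_iff (he : LinearIndependent R e) (a : ι → R) :
    ∑ i, a i • e i ∈ span R (e '' s) ↔ ∀ i ∉ s, a i = 0 := by
  constructor
  · intro h i hi
    obtain ⟨l, hls, hl⟩ := (Finsupp.mem_span_image_iff_linearCombination R).1 h
    have hla : l = (Finsupp.linearEquivFunOnFinite R R ι).symm a := he <| by
      rw [hl, Finsupp.linearCombination_eq_fintype_linearCombination_apply,
        Fintype.linearCombination_apply]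
    have : l i = 0 := Finsupp.notMem_support_iff.1 fun hmem => hi (hls hmem)
    simpa [hla] using this
  · intro h
    refine sum_mem fun i _ => ?_
    by_cases hi : i ∈ s
    · exact smul_mem _ _ (subset_span ⟨i, hi, rfl⟩)
    · simp [h i hi]

theorem mkQ_sum_smul (p : Submodule R V) (a : ι → R) :
    ∑ i, a i • p.mkQ (e i) = p.mkQ (∑ i, a i • e i) := by
  simp only [map_sum, map_smul]

theorem sum_indicator_compl_smul_mkQ_span_image (a : ι → R) :
    ∑ i, sᶜ.indicator a i • (span R (e '' s)).mkQ (e i) =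
      ∑ i, a i • (span R (e '' s)).mkQ (e i) := by
  refine Finset.sum_congr rfl fun i _ => ?_
  by_cases hi : i ∈ s
  · simp [hi, (Quotient.mk_eq_zero _).2 (subset_span (Set.mem_image_of_mem e hi))]
  · simp [hi]

theorem LinearIndependent.eq_of_sum_smul_mkQ_eq (he : LinearIndependent R e) {c c' : ι → R}
    (hc : ∀ i ∈ s, c i = 0) (hc' : ∀ i ∈ s, c' i = 0)
    (h : ∑ i, c i • (span R (e '' s)).mkQ (e i) = ∑ i, c' i • (span R (e '' s)).mkQ (e i)) :
    c = c' := by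
  have hmem : ∑ i, (c - c') i • e i ∈ span R (e '' s) := by
    rw [← Quotient.mk_eq_zero, ← mkQ_apply, ← mkQ_sum_smul]
    simp only [Pi.sub_apply, sub_smul, Finset.sum_sub_distrib, h, sub_self]
  funext i
  by_cases hi : i ∈ s
  · rw [hc i hi, hc' i hi]
  · exact sub_eq_zero.1 ((he.sum_smul_mem_span_image_iff _).1 hmem i hi)

theorem LinearIndependent.exists_nonneg_sum_and_mkQ_eq_iff [PartialOrder R] [IsOrderedAddMonoid R]
    (he : LinearIndependent R e) {c : ι → R} (hc0 : ∀ i, 0 ≤ c i) (hcs : ∀ i ∈ s, c i = 0)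
    (mu lam : V) :
    ((∃ b : ι → R, (∀ i, 0 ≤ b i) ∧ mu - lam = ∑ i, b i • e i) ∧
        (span R (e '' s)).mkQ lam = (span R (e '' s)).mkQ (mu - ∑ i, c i • e i)) ↔
      ∃ b : ι → R, (∀ i, 0 ≤ b i) ∧ (∀ i ∉ s, b i = 0) ∧
        (mu - ∑ i, c i • e i) - lam = ∑ i, b i • e i := by
  simp only [mkQ_apply, Submodule.Quotient.eq]
  constructor
  · rintro ⟨⟨b, hb0, hb⟩, hlam⟩
    have hbc : (mu - ∑ i, c i • e i) - lam = ∑ i, (b - c) i • e i := by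
      simp only [Pi.sub_apply, sub_smul, Finset.sum_sub_distrib, ← hb]
      abel
    have hbcs : ∀ i ∉ s, (b - c) i = 0 := by
      rw [← he.sum_smul_mem_span_image_iff, ← hbc, ← neg_sub]
      exact neg_mem hlam
    refine ⟨b - c, fun i => ?_, hbcs, hbc⟩
    by_cases hi : i ∈ s
    · simpa [hcs i hi] using hb0 i
    · exact (hbcs i hi).ge
  · rintro ⟨b, hb0, hbs, hb⟩
    refine ⟨⟨c + b, fun i => add_nonneg (hc0 i) (hb0 i), ?_⟩, ?_⟩
    · simp only [Pi.add_apply, add_smul, Finset.sum_add_distrib, ← hb]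
      abel
    · rw [← neg_sub, hb]
      exact neg_mem ((he.sum_smul_mem_span_image_iff b).2 hbs)

end

/-- Combinatorial identity (1.34): given `μ` and `ν` in the quotient with
`pr(μ) - ν` in the image of the positive cone, there are unique nonnegative
coefficients `c` supported outside `Γ_M` with `pr(μ) - ∑ c_γ pr(e_γ) = ν`, and
for `μ_ν := μ - ∑ c_γ e_γ` one has, for every `λ`:
`λ ≤ μ` and `pr(λ) = ν` iff `λ ≤_{Γ_M} μ_ν`. -/
theorem stmt1 {V : Type*} [AddCommGroup V] [Module ℚ V]
    {Γ : Type*} [Fintype Γ] (e : Γ → V) (he : LinearIndependent ℚ e)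
    (ΓM : Set Γ) (mu : V) (nu : V ⧸ Submodule.span ℚ (e '' ΓM))
    (hnu : ∃ d : Γ → ℚ, (∀ γ, 0 ≤ d γ) ∧
      (Submodule.span ℚ (e '' ΓM)).mkQ mu - nu
        = (Submodule.span ℚ (e '' ΓM)).mkQ (∑ γ, d γ • e γ)) :
    (∃! c : Γ → ℚ, (∀ γ, 0 ≤ c γ) ∧ (∀ γ ∈ ΓM, c γ = 0) ∧
        (Submodule.span ℚ (e '' ΓM)).mkQ mu
          - ∑ γ, c γ • (Submodule.span ℚ (e '' ΓM)).mkQ (e γ) = nu) ∧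
    (∀ c : Γ → ℚ,
      ((∀ γ, 0 ≤ c γ) ∧ (∀ γ ∈ ΓM, c γ = 0) ∧
        (Submodule.span ℚ (e '' ΓM)).mkQ mu
          - ∑ γ, c γ • (Submodule.span ℚ (e '' ΓM)).mkQ (e γ) = nu) →
      ∀ lam : V,
        ((∃ b : Γ → ℚ, (∀ γ, 0 ≤ b γ) ∧ mu - lam = ∑ γ, b γ • e γ) ∧
          (Submodule.span ℚ (e '' ΓM)).mkQ lam = nu) ↔
        (∃ b : Γ → ℚ, (∀ γ, 0 ≤ b γ) ∧ (∀ γ ∉ ΓM, b γ = 0) ∧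
          (mu - ∑ γ, c γ • e γ) - lam = ∑ γ, b γ • e γ)) := by
  obtain ⟨d, hd0, hd⟩ := hnu
  have sub_eq_iff (c : Γ → ℚ) : (Submodule.span ℚ (e '' ΓM)).mkQ mu
      - ∑ γ, c γ • (Submodule.span ℚ (e '' ΓM)).mkQ (e γ) = nu ↔
      ∑ γ, c γ • (Submodule.span ℚ (e '' ΓM)).mkQ (e γ)
        = (Submodule.span ℚ (e '' ΓM)).mkQ mu - nu := by
    rw [sub_eq_iff_eq_add, eq_sub_iff_add_eq', eq_comm]
  have hdM : ∀ γ ∈ ΓM, ΓMᶜ.indicator d γ = 0 :=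
    fun γ hγ => Set.indicator_of_notMem (Set.notMem_compl_iff.2 hγ) d
  have hdsum : ∑ γ, ΓMᶜ.indicator d γ • (Submodule.span ℚ (e '' ΓM)).mkQ (e γ)
      = (Submodule.span ℚ (e '' ΓM)).mkQ mu - nu := by
    rw [sum_indicator_compl_smul_mkQ_span_image, mkQ_sum_smul, hd]
  refine ⟨⟨ΓMᶜ.indicator d,
    ⟨Set.indicator_nonneg fun γ _ => hd0 γ, hdM, (sub_eq_iff _).2 hdsum⟩, ?_⟩, ?_⟩
  · rintro c ⟨-, hcM, hc⟩
    exact he.eq_of_sum_smul_mkQ_eq hcM hdM (((sub_eq_iff c).1 hc).trans hdsum.symm)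
  · rintro c ⟨hc0, hcM, rfl⟩ lam
    rw [mkQ_sum_smul, ← map_sub]
    exact he.exists_nonneg_sum_and_mkQ_eq_iff hc0 hcM mu lam
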